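/- arXiv:2505.14209 — 2 statements merged into one kernel-verified Lean document; each statement's English description precedes it below -/
import Mathlib

section
/- Let the payoff function be P(x,y,z) = √((x−a)² + y² + (z−b)²) − (1/v)·√((x−x₀)² + (y−y₀)² + (z−z₀)²) with b = 0, subject to the constraint x² + y² + z² = R². Any critical point (x,y,z) of the constrained optimization (via Lagrange multipliers) with z ≠ 0 and the relevant distances nonzero satisfies y₀·z = y·z₀, i.e., the optimal breach point lies in the plane through the origin containing the attacker position (x₀,y₀,z₀) and the defender position (a,0,0). -/
/-- Any Lagrange critical point `(x,y,z)` of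
`P = dD - (1/v) dA` on the sphere `x² + y² + z² = R²`, with defender `D = (a,0,0)` and
attacker `A = (x₀,y₀,z₀)`, `z ≠ 0` and `dD, dA > 0`, satisfies `y₀ z = y z₀`. -/
theorem stmt_2 (a x₀ y₀ z₀ v R x y z lam dD dA : ℝ)
    (hv : 0 < v) (hv1 : v ≤ 1) (hR : 0 < R)
    (hdD : dD = Real.sqrt ((x - a) ^ 2 + y ^ 2 + z ^ 2))
    (hdA : dA = Real.sqrt ((x - x₀) ^ 2 + (y - y₀) ^ 2 + (z - z₀) ^ 2))
    (hdDpos : 0 < dD) (hdApos : 0 < dA) (hz : z ≠ 0)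
    (hcon : x ^ 2 + y ^ 2 + z ^ 2 = R ^ 2)
    (hLx : (x - a) / dD - (1 / v) * ((x - x₀) / dA) = lam * (2 * x))
    (hLy : y / dD - (1 / v) * ((y - y₀) / dA) = lam * (2 * y))
    (hLz : z / dD - (1 / v) * ((z - z₀) / dA) = lam * (2 * z)) :
    y₀ * z = y * z₀ := by
  have hD := hdDpos.ne'
  have hA := hdApos.ne'
  have hvne := hv.ne'
  field_simp at hLy hLz
  have key : dD * (y₀ * z - y * z₀) = 0 := by linear_combination z * hLy - y * hLz
  have := mul_eq_zero.mp key
  rcases this with h | h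
  · exact absurd h hdDpos.ne'
  · linarith
end

section
/- Under the identity ‖AB‖ = √(r_A² − R² cos² β) − R sin β and the law of cosines ‖AB‖² = r_A² + R² − 2 r_A R cos(θ − φ), one derives cos(θ − φ) = sin(β + arcsin(R cos β / r_A)). -/
/-- From `AB = √(r_A² - R² cos² β) - R sin β` and the law of cosines
`AB² = r_A² + R² - 2 r_A R cos(θ - φ)`, one derives
`cos(θ - φ) = sin(β + arcsin(R cos β / r_A))`. -/
theorem stmt_6 (rA R β θ φ AB : ℝ)
    (hR : 0 < R) (hrA : R ≤ rA)
    (hβ0 : 0 ≤ β) (hβ1 : β ≤ Real.pi / 2)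
    (hθφ0 : 0 ≤ θ - φ) (hθφ1 : θ - φ ≤ Real.pi)
    (hAB : AB = Real.sqrt (rA ^ 2 - R ^ 2 * Real.cos β ^ 2) - R * Real.sin β)
    (hABnn : 0 ≤ AB)
    (hlaw : AB ^ 2 = rA ^ 2 + R ^ 2 - 2 * rA * R * Real.cos (θ - φ)) :
    Real.cos (θ - φ) = Real.sin (β + Real.arcsin (R * Real.cos β / rA)) := by
  have hrA0 : (0:ℝ) < rA := hR.trans_le hrA
  have hcosβ : 0 ≤ Real.cos β := Real.cos_nonneg_of_mem_Icc ⟨by linarith [Real.pi_pos], hβ1⟩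
  have hcos1 : Real.cos β ≤ 1 := Real.cos_le_one β
  have hnn : 0 ≤ rA ^ 2 - R ^ 2 * Real.cos β ^ 2 := by
    nlinarith [sq_nonneg (Real.cos β), mul_le_one₀ hcos1 hcosβ hcos1, sq_nonneg R, mul_le_mul hrA hrA hR.le (hR.trans_le hrA).le]
  set s := Real.sqrt (rA ^ 2 - R ^ 2 * Real.cos β ^ 2) with hs_def
  have hs0 : 0 ≤ s := Real.sqrt_nonneg _
  have hs2 : s ^ 2 = rA ^ 2 - R ^ 2 * Real.cos β ^ 2 := Real.sq_sqrt hnn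
  set x := R * Real.cos β / rA with hx_def
  have hx0 : 0 ≤ x := by positivity
  have hx1 : x ≤ 1 := by
    rw [hx_def, div_le_one hrA0]; nlinarith
  have hcos_arcsin : Real.cos (Real.arcsin x) = s / rA := by
    rw [Real.cos_arcsin]
    have h1 : 1 - x ^ 2 = (rA ^ 2 - R ^ 2 * Real.cos β ^ 2) / rA ^ 2 := by
      rw [hx_def]; field_simp
    rw [h1, Real.sqrt_div hnn, Real.sqrt_sq hrA0.le]
  have hsin_arcsin : Real.sin (Real.arcsin x) = x := Real.sin_arcsin (by linarith) hx1
  have hsin2 : Real.sin β ^ 2 = 1 - Real.cos β ^ 2 := by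
    have := Real.sin_sq_add_cos_sq β; linarith
  have key : Real.cos (θ - φ) = (R * Real.cos β ^ 2 + s * Real.sin β) / rA := by
    rw [hAB] at hlaw
    rw [eq_div_iff hrA0.ne']
    nlinarith [hlaw, hs2, hsin2]
  rw [Real.sin_add, hcos_arcsin, hsin_arcsin, key, hx_def]
  field_simp
  ring
end
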